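/- Let n ≥ 1, ξ ∈ ℝⁿ, and let w : [0,∞) → ℂ be twice continuously differentiable and satisfy (1+m(ξ))·w''(t) + m(ξ)(1+m(ξ))·w(t) + w'(t) = 0 for all t > 0. Define E₀(t) := (1+m(ξ))|w'(t)|²/2 + m(ξ)(1+m(ξ))|w(t)|²/2 and E(t) := E₀(t) + ρ(ξ)(1+m(ξ))·Re(w'(t)·conj(w(t))) + (ρ(ξ)/2)|w(t)|². Then E'(t) + (ρ(ξ)/2)·E(t) ≤ 0 for all t > 0. -/

import Mathlib

open MeasureTheory Real

noncomputable section

def mlog {n : ℕ} (ξ : EuclideanSpace ℝ (Fin n)) : ℝ := Real.log (1 + ‖ξ‖ ^ 2)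

def rho {n : ℕ} (ξ : EuclideanSpace ℝ (Fin n)) : ℝ :=
  min (min ((1/2) * mlog ξ * (1 + mlog ξ)) (1 / (2 * (1 + mlog ξ))))
    ((1/2) * Real.sqrt (mlog ξ))

def ft {n : ℕ} (f : EuclideanSpace ℝ (Fin n) → ℂ) (ξ : EuclideanSpace ℝ (Fin n)) : ℂ :=
  ∫ x, Complex.exp (-Complex.I * ((inner ℝ x ξ : ℝ) : ℂ)) * f x

def normL1 {n : ℕ} (f : EuclideanSpace ℝ (Fin n) → ℂ) : ℝ := ∫ x, ‖f x‖

def norm11 {n : ℕ} (f : EuclideanSpace ℝ (Fin n) → ℂ) : ℝ :=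
  ∫ x, (1 + ‖x‖) * ‖f x‖

def MemL11 {n : ℕ} (f : EuclideanSpace ℝ (Fin n) → ℂ) : Prop :=
  Integrable f ∧ Integrable (fun x => (1 + ‖x‖) * ‖f x‖)

def Ysq {n : ℕ} (f : EuclideanSpace ℝ (Fin n) → ℂ) (δ : ℝ) : ℝ :=
  ∫ ξ, (1 + mlog ξ) ^ δ * ‖ft f ξ‖ ^ 2

def MemY {n : ℕ} (f : EuclideanSpace ℝ (Fin n) → ℂ) (δ : ℝ) : Prop :=
  Integrable (fun ξ => (1 + mlog ξ) ^ δ * ‖ft f ξ‖ ^ 2)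

def IsFourierSol {n : ℕ} (u₀ u₁ : EuclideanSpace ℝ (Fin n) → ℂ)
    (v : ℝ → EuclideanSpace ℝ (Fin n) → ℂ) : Prop :=
  Measurable (Function.uncurry v) ∧
  ∀ ξ, ContDiff ℝ 2 (fun t => v t ξ) ∧
    (∀ t > (0:ℝ), ((1 + mlog ξ : ℝ) : ℂ) * deriv (deriv (fun s => v s ξ)) t
        + ((mlog ξ * (1 + mlog ξ) : ℝ) : ℂ) * v t ξ + deriv (fun s => v s ξ) t = 0) ∧
    v 0 ξ = ft u₀ ξ ∧ deriv (fun s => v s ξ) 0 = ft u₁ ξ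

def PP {n : ℕ} (u₀ u₁ : EuclideanSpace ℝ (Fin n) → ℂ) : ℂ := (∫ x, u₀ x) + ∫ x, u₁ x

def prof1 {n : ℕ} (u₀ u₁ : EuclideanSpace ℝ (Fin n) → ℂ) (t : ℝ)
    (ξ : EuclideanSpace ℝ (Fin n)) : ℂ :=
  PP u₀ u₁ * ((Real.exp (-(t * (mlog ξ * (1 + mlog ξ)))) : ℝ) : ℂ)

def prof2 {n : ℕ} (u₀ u₁ : EuclideanSpace ℝ (Fin n) → ℂ) (t : ℝ)
    (ξ : EuclideanSpace ℝ (Fin n)) : ℂ :=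
  ((Real.exp (-(t / (2 * mlog ξ))) : ℝ) : ℂ) *
    (((Real.sin (Real.sqrt (mlog ξ) * t) / Real.sqrt (mlog ξ) : ℝ) : ℂ) * ft u₁ ξ
      + ((Real.cos (Real.sqrt (mlog ξ) * t) : ℝ) : ℂ) * ft u₀ ξ)

def I0 {n : ℕ} (u₀ u₁ : EuclideanSpace ℝ (Fin n) → ℂ) (l : ℝ) : ℝ :=
  Real.sqrt (norm11 u₀ ^ 2 + norm11 u₁ ^ 2 + Ysq u₀ (l + 1) + Ysq u₁ l)

/-!
Along a solution of `a w'' + b w + w' = 0` the energy `a |w'|²/2 + b |w|²/2` decays at rate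
`|w'|²`, and the correction terms `r a ⟪w, w'⟫ + r |w|²/2` add exactly `r a |w'|² - r b |w|²`,
so `E' = (r a - 1) |w'|² - r b |w|²`. The three bounds built into `ρ` (`ρ a ≤ 1/2`, `2ρ ≤ b`,
`4ρ² ≤ m`) then make `E' + (ρ/2) E` a negative semidefinite quadratic form in
`(|w'|, |w|)` once the cross term is bounded by Cauchy–Schwarz.
-/

open scoped InnerProductSpace

section DampedEnergy

variable {E : Type*} [NormedAddCommGroup E] [InnerProductSpace ℝ E]

/-- On `ℂ`, `⟪u, v⟫_ℝ = re (v * conj u)` (`Complex.inner`), so for `a = 1 + m`, `b = m (1 + m)`,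
`r = ρ` this is the energy `E` of the statement with `u = w`, `v = w'`. -/
def dampedEnergy (a b r : ℝ) (u v : E) : ℝ :=
  a * ‖v‖ ^ 2 / 2 + b * ‖u‖ ^ 2 / 2 + r * a * ⟪u, v⟫_ℝ + r / 2 * ‖u‖ ^ 2

theorem hasDerivAt_dampedEnergy {a b r t : ℝ} {u v : ℝ → E} {v' : E}
    (hu : HasDerivAt u (v t) t) (hv : HasDerivAt v v' t)
    (hode : a • v' + b • u t + v t = 0) :
    HasDerivAt (fun s => dampedEnergy a b r (u s) (v s))
      ((r * a - 1) * ‖v t‖ ^ 2 - r * b * ‖u t‖ ^ 2) t := by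
  have hacc : a • v' = -(b • u t) - v t := by rw [← sub_eq_zero, ← hode]; abel
  have hkin : a * ⟪v t, v'⟫_ℝ = -(b * ⟪u t, v t⟫_ℝ) - ‖v t‖ ^ 2 := by
    rw [← real_inner_smul_right, hacc, inner_sub_right, inner_neg_right, real_inner_smul_right,
      real_inner_self_eq_norm_sq, real_inner_comm]
  have hmix : a * ⟪u t, v'⟫_ℝ = -(b * ‖u t‖ ^ 2) - ⟪u t, v t⟫_ℝ := by
    rw [← real_inner_smul_right, hacc, inner_sub_right, inner_neg_right, real_inner_smul_right,
      real_inner_self_eq_norm_sq]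
  have hderiv := ((((hv.norm_sq.const_mul a).div_const 2).add
    ((hu.norm_sq.const_mul b).div_const 2)).add ((hu.inner ℝ hv).const_mul (r * a))).add
    (hu.norm_sq.const_mul (r / 2))
  refine hderiv.congr_deriv ?_
  rw [real_inner_self_eq_norm_sq]
  linear_combination hkin + r * hmix

theorem dampedEnergy_dissipation {a b r : ℝ} (u v : E) (ha : 0 ≤ a) (hr : 0 ≤ r)
    (hra : r * a ≤ 1 / 2) (hrb : 2 * r ≤ b) (hr2 : 4 * r ^ 2 * a ≤ b) :
    (r * a - 1) * ‖v‖ ^ 2 - r * b * ‖u‖ ^ 2 + r / 2 * dampedEnergy a b r u v ≤ 0 := by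
  have hcross : r ^ 2 * a / 2 * ⟪u, v⟫_ℝ ≤ 3 / 8 * ‖v‖ ^ 2 + r ^ 4 * a ^ 2 / 6 * ‖u‖ ^ 2 := by
    nlinarith [mul_le_mul_of_nonneg_left (real_inner_le_norm u v) (by positivity : 0 ≤ r ^ 2 * a),
      sq_nonneg (3 * ‖v‖ - 2 * r ^ 2 * a * ‖u‖)]
  have hr4 : r ^ 4 * a ^ 2 ≤ r * b / 8 := by
    have := mul_le_mul hra hr2 (by positivity) (by norm_num)
    nlinarith
  have hr2b : r ^ 2 ≤ r * b / 2 := by nlinarith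
  unfold dampedEnergy
  nlinarith [mul_le_mul_of_nonneg_right hra (sq_nonneg ‖v‖),
    mul_le_mul_of_nonneg_right (add_le_add hr4 hr2b) (sq_nonneg ‖u‖)]

end DampedEnergy

section rho

variable {n : ℕ} (ξ : EuclideanSpace ℝ (Fin n))

theorem mlog_nonneg : 0 ≤ mlog ξ :=
  Real.log_nonneg (by nlinarith [sq_nonneg ‖ξ‖])

theorem rho_nonneg : 0 ≤ rho ξ := by
  have := mlog_nonneg ξ
  unfold rho
  positivity

theorem rho_mul_one_add_mlog_le : rho ξ * (1 + mlog ξ) ≤ 1 / 2 := by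
  have h : 0 < 1 + mlog ξ := by linarith [mlog_nonneg ξ]
  calc rho ξ * (1 + mlog ξ) ≤ 1 / (2 * (1 + mlog ξ)) * (1 + mlog ξ) :=
        mul_le_mul_of_nonneg_right ((min_le_left _ _).trans (min_le_right _ _)) h.le
    _ = 1 / 2 := by field_simp

theorem two_mul_rho_le : 2 * rho ξ ≤ mlog ξ * (1 + mlog ξ) := by
  have : rho ξ ≤ 1 / 2 * mlog ξ * (1 + mlog ξ) := (min_le_left _ _).trans (min_le_left _ _)
  linarith

theorem four_mul_rho_sq_le : 4 * rho ξ ^ 2 ≤ mlog ξ := by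
  have h : rho ξ ≤ 1 / 2 * √(mlog ξ) := min_le_right _ _
  nlinarith [Real.sq_sqrt (mlog_nonneg ξ), mul_self_le_mul_self (rho_nonneg ξ) h]

end rho

theorem energy_differential_inequality_general (n : ℕ) (ξ : EuclideanSpace ℝ (Fin n))
    (w : ℝ → ℂ) (hw : ContDiff ℝ 2 w)
    (hode : ∀ t > (0:ℝ), ((1 + mlog ξ : ℝ) : ℂ) * deriv (deriv w) t
        + ((mlog ξ * (1 + mlog ξ) : ℝ) : ℂ) * w t + deriv w t = 0) :
    ∀ t > (0:ℝ),
      deriv (fun s => (1 + mlog ξ) * ‖deriv w s‖ ^ 2 / 2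
          + mlog ξ * (1 + mlog ξ) * ‖w s‖ ^ 2 / 2
          + rho ξ * (1 + mlog ξ) * (deriv w s * (starRingEnd ℂ) (w s)).re
          + (rho ξ / 2) * ‖w s‖ ^ 2) t
        + (rho ξ / 2) * ((1 + mlog ξ) * ‖deriv w t‖ ^ 2 / 2
          + mlog ξ * (1 + mlog ξ) * ‖w t‖ ^ 2 / 2
          + rho ξ * (1 + mlog ξ) * (deriv w t * (starRingEnd ℂ) (w t)).re
          + (rho ξ / 2) * ‖w t‖ ^ 2) ≤ 0 := by
  intro t ht
  have hu : HasDerivAt w (deriv w t) t := (hw.differentiable two_ne_zero t).hasDerivAt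
  have hv : HasDerivAt (deriv w) (deriv (deriv w) t) t :=
    (hw.differentiable_deriv_two t).hasDerivAt
  have hode' : (1 + mlog ξ) • deriv (deriv w) t + (mlog ξ * (1 + mlog ξ)) • w t
      + deriv w t = 0 := by
    simpa only [Complex.real_smul] using hode t ht
  simp only [← Complex.inner, ← dampedEnergy.eq_1]
  rw [(hasDerivAt_dampedEnergy hu hv hode').deriv]
  have ha : 0 ≤ 1 + mlog ξ := by linarith [mlog_nonneg ξ]
  exact dampedEnergy_dissipation _ _ ha (rho_nonneg ξ) (rho_mul_one_add_mlog_le ξ)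
    (two_mul_rho_le ξ) (mul_le_mul_of_nonneg_right (four_mul_rho_sq_le ξ) ha)

theorem energy_differential_inequality (n : ℕ) (hn : 1 ≤ n) (ξ : EuclideanSpace ℝ (Fin n))
    (w : ℝ → ℂ) (hw : ContDiff ℝ 2 w)
    (hode : ∀ t > (0:ℝ), ((1 + mlog ξ : ℝ) : ℂ) * deriv (deriv w) t
        + ((mlog ξ * (1 + mlog ξ) : ℝ) : ℂ) * w t + deriv w t = 0) :
    ∀ t > (0:ℝ),
      deriv (fun s => (1 + mlog ξ) * ‖deriv w s‖ ^ 2 / 2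
          + mlog ξ * (1 + mlog ξ) * ‖w s‖ ^ 2 / 2
          + rho ξ * (1 + mlog ξ) * (deriv w s * (starRingEnd ℂ) (w s)).re
          + (rho ξ / 2) * ‖w s‖ ^ 2) t
        + (rho ξ / 2) * ((1 + mlog ξ) * ‖deriv w t‖ ^ 2 / 2
          + mlog ξ * (1 + mlog ξ) * ‖w t‖ ^ 2 / 2
          + rho ξ * (1 + mlog ξ) * (deriv w t * (starRingEnd ℂ) (w t)).re
          + (rho ξ / 2) * ‖w t‖ ^ 2) ≤ 0 :=
  energy_differential_inequality_general n ξ w hw hode
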